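/- arXiv:1711.03185 — 9 statements merged into one kernel-verified Lean document; each statement's English description precedes it below -/
import Mathlib

section
/- Each set S_i = conv{0, e_1, ..., e_{i-1}} \ conv{0, e_1, ..., e_{i-2}} is convex. -/
/-! For `t < d`, `F d (t + 1)` is the join of the vertex `Pi.single t 1` with `F d t`, and `F d t`
lies in the hyperplane `x t = 0`. A point `a • Pi.single t 1 + b • z` of the join (`z ∈ F d t`) has
`t`-th coordinate `a`, so it lies outside `F d t` exactly when that coordinate is positive: the
difference `F d (t + 1) \ F d t` is the convex set `F d (t + 1)` cut by an open half-space. For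
`t ≥ d` there is no new vertex and the difference is empty. -/

open Set

noncomputable def basisPts (d t : ℕ) : Set (Fin d → ℝ) :=
  insert 0 {x | ∃ m : Fin d, (m : ℕ) < t ∧ x = Pi.single m 1}

noncomputable def F (d t : ℕ) : Set (Fin d → ℝ) := convexHull ℝ (basisPts d t)

noncomputable def S (d i : ℕ) : Set (Fin d → ℝ) :=
  F d (i - 1) \ (if i ≤ 1 then ∅ else F d (i - 2))

section ConvexHullInsert

variable {𝕜 E : Type*} [Field 𝕜] [LinearOrder 𝕜] [IsStrictOrderedRing 𝕜] [AddCommGroup E]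
  [Module 𝕜 E]

theorem Convex.convexHull_insert_diff_eq_inter {s : Set E} (hs : Convex 𝕜 s) {f : E →ₗ[𝕜] 𝕜}
    (hf : ∀ z ∈ s, f z = 0) {e : E} (he : 0 < f e) :
    convexHull 𝕜 (insert e s) \ s = convexHull 𝕜 (insert e s) ∩ {x | 0 < f x} := by
  ext x
  simp only [mem_sdiff, mem_inter_iff, mem_ofPred_eq, and_congr_right_iff]
  intro hx
  refine ⟨fun hxs => ?_, fun hfx hxs => (hf x hxs).not_gt hfx⟩
  rcases s.eq_empty_or_nonempty with rfl | hs₀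
  · simp_all
  rw [convexHull_insert hs₀, hs.convexHull_eq, mem_convexJoin] at hx
  obtain ⟨_, rfl, z, hz, a, b, ha, hb, hab, rfl⟩ := hx
  have ha₀ : a ≠ 0 := by
    rintro rfl
    obtain rfl : b = 1 := by simpa using hab
    simp_all
  simpa [hf z hz] using mul_pos (ha.lt_of_ne' ha₀) he

end ConvexHullInsert

theorem basisPts_succ_of_lt {d t : ℕ} (ht : t < d) :
    basisPts d (t + 1) = insert (Pi.single ⟨t, ht⟩ 1) (basisPts d t) := by
  have (m : Fin d) : (m : ℕ) < t + 1 ↔ (m : ℕ) < t ∨ m = ⟨t, ht⟩ := by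
    rw [Fin.ext_iff]
    exact Nat.lt_succ_iff_lt_or_eq
  ext y
  simp only [basisPts, mem_insert_iff, mem_ofPred_eq, this, or_and_right, exists_or, exists_eq_left]
  exact or_rotate.symm

theorem basisPts_succ_of_le {d t : ℕ} (ht : d ≤ t) : basisPts d (t + 1) = basisPts d t := by
  have (m : Fin d) : (m : ℕ) < t + 1 ↔ (m : ℕ) < t := by omega
  simp only [basisPts, this]

theorem convex_F (d t : ℕ) : Convex ℝ (F d t) :=
  convex_convexHull ℝ _

theorem F_succ_of_lt {d t : ℕ} (ht : t < d) :
    F d (t + 1) = convexHull ℝ (insert (Pi.single ⟨t, ht⟩ 1) (F d t)) := by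
  rw [F, F, basisPts_succ_of_lt ht, insert_eq, insert_eq, convexHull_convexHull_union_right]

theorem apply_eq_zero_of_mem_F {d t : ℕ} {x : Fin d → ℝ} (hx : x ∈ F d t) {j : Fin d}
    (hj : t ≤ j) : x j = 0 := by
  refine convexHull_min ?_ (convex_hyperplane (LinearMap.proj j).isLinear 0) hx
  rintro _ (rfl | ⟨m, hm, rfl⟩)
  · simp
  · simp [Fin.ne_of_gt (hm.trans_le hj)]

theorem convex_F_succ_diff (d t : ℕ) : Convex ℝ (F d (t + 1) \ F d t) := by
  rcases lt_or_ge t d with ht | ht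
  · rw [F_succ_of_lt ht, (convex_F d t).convexHull_insert_diff_eq_inter
      (f := LinearMap.proj ⟨t, ht⟩) (fun z hz => apply_eq_zero_of_mem_F hz le_rfl) (by simp)]
    exact (convex_convexHull ℝ _).inter (convex_halfSpace_gt (LinearMap.proj _).isLinear 0)
  · rw [F, F, basisPts_succ_of_le ht, sdiff_self]
    exact convex_empty

theorem S_convex_general (k i : ℕ) :
    Convex ℝ (S (k - 1) i) := by
  match i with
  | 0 | 1 => simpa [S] using convex_F (k - 1) 0
  | t + 2 => simpa [S] using convex_F_succ_diff (k - 1) t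

theorem S_convex (k i : ℕ) (hi1 : 1 ≤ i) (hik : i ≤ k) :
    Convex ℝ (S (k - 1) i) :=
  S_convex_general k i
end

section
/- Let T ⊆ {1, ..., k} be nonempty with maximum element m. Then the union ⋃_{i ∈ T} S_i is convex if (and only if) the set ⋃_{i ∈ T, i < m} S_i is convex, where S_m is a convex subset of the simplex conv{0, e_1, ..., e_{m-1}} whose removed facet conv{0, e_1, ..., e_{m-2}} contains all S_i with i < m. -/
open Set

/-!
Let `m = max T`, `F = conv{0, e_1, …, e_{m-1}}` and `φ = x_{m-1}`. Every `S_i` with `i < m` lies in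
the facet `conv{0, e_1, …, e_{m-2}} = F ∩ {φ = 0}`, while `S_m = F ∩ {φ > 0}`. For a convex `K` and
`A ⊆ K ∩ {φ = 0}`, the set `A ∪ (K ∩ {φ > 0})` is convex iff `A` is: `A` is its trace on the
hyperplane `φ = 0`, and an open segment with an endpoint in `K ∩ {φ > 0}` and the other in
`K ∩ {φ ≥ 0}` stays in `K ∩ {φ > 0}`. In the degenerate cases `m ≤ 1` (everything lies in `{0}`)
and `m > k` (`S_m = ∅`) there is nothing to prove.
-/

section ConvexUnion

variable {𝕜 E : Type*} [Semiring 𝕜] [PartialOrder 𝕜] [IsStrictOrderedRing 𝕜]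
  [AddCommMonoid E] [Module 𝕜 E] {K A : Set E} {φ : E →ₗ[𝕜] 𝕜}

lemma openSegment_subset_sep_pos (hK : Convex 𝕜 K) {x y : E} (hx : x ∈ K) (hy : y ∈ K)
    (hφx : 0 ≤ φ x) (hφy : 0 < φ y) : openSegment 𝕜 x y ⊆ {z ∈ K | 0 < φ z} := by
  rintro _ ⟨a, b, ha, hb, hab, rfl⟩
  refine ⟨hK hx hy ha.le hb.le hab, ?_⟩
  rw [map_add, map_smul, map_smul, smul_eq_mul, smul_eq_mul]
  exact add_pos_of_nonneg_of_pos (mul_nonneg ha.le hφx) (mul_pos hb hφy)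

theorem convex_union_sep_pos_iff (hK : Convex 𝕜 K) (hAK : A ⊆ K) (hAφ : ∀ x ∈ A, φ x = 0) :
    Convex 𝕜 (A ∪ {x ∈ K | 0 < φ x}) ↔ Convex 𝕜 A := by
  constructor
  · intro h
    have hA : A = (A ∪ {x ∈ K | 0 < φ x}) ∩ {x | φ x = 0} := by
      ext x
      constructor
      · exact fun hx => ⟨Or.inl hx, hAφ x hx⟩
      · rintro ⟨hx | hx, hx0⟩
        · exact hx
        · exact absurd hx0 hx.2.ne'
    rw [hA]
    exact h.inter (convex_hyperplane φ.isLinear 0)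
  · intro hA
    have hmem : ∀ x ∈ A ∪ {x ∈ K | 0 < φ x}, x ∈ K ∧ 0 ≤ φ x := by
      rintro x (hx | hx)
      · exact ⟨hAK hx, (hAφ x hx).ge⟩
      · exact ⟨hx.1, hx.2.le⟩
    refine convex_iff_openSegment_subset.mpr fun x hx y hy => ?_
    rcases hy with hyA | hyP
    · rcases hx with hxA | hxP
      · exact (hA.openSegment_subset hxA hyA).trans subset_union_left
      · rw [openSegment_symm]
        exact (openSegment_subset_sep_pos hK (hAK hyA) hxP.1 (hAφ y hyA).ge hxP.2).trans
          subset_union_right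
    · exact (openSegment_subset_sep_pos hK (hmem x hx).1 hyP.1 (hmem x hx).2 hyP.2).trans
        subset_union_right

end ConvexUnion

lemma Finset.set_biUnion_eq_filter_lt_max'_union {α β : Type*} [LinearOrder α] (s : Finset α)
    (hs : s.Nonempty) (f : α → Set β) :
    ⋃ i ∈ s, f i = (⋃ i ∈ s.filter (· < s.max' hs), f i) ∪ f (s.max' hs) := by
  have hs_eq : s = insert (s.max' hs) (s.filter (· < s.max' hs)) := by
    ext i
    simp only [Finset.mem_insert, Finset.mem_filter]
    constructor
    · intro hi
      exact (s.le_max' i hi).eq_or_lt.imp id (⟨hi, ·⟩)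
    · rintro (rfl | ⟨hi, -⟩)
      exacts [s.max'_mem hs, hi]
  conv_lhs => rw [hs_eq, Finset.set_biUnion_insert]
  exact Set.union_comm _ _

lemma F_mono (d : ℕ) {t t' : ℕ} (h : t ≤ t') : F d t ⊆ F d t' := by
  refine convexHull_mono (insert_subset_insert ?_)
  rintro _ ⟨j, hj, rfl⟩
  exact ⟨j, hj.trans_le h, rfl⟩

lemma zero_mem_F (d t : ℕ) : (0 : Fin d → ℝ) ∈ F d t :=
  subset_convexHull ℝ _ (mem_insert _ _)

lemma F_zero (d : ℕ) : F d 0 = {0} := by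
  simp [F, basisPts]

lemma F_subset_coord_eq_zero {d t : ℕ} {j : Fin d} (hj : t ≤ j) : F d t ⊆ {x | x j = 0} := by
  refine convexHull_min ?_ (convex_hyperplane (LinearMap.proj j).isLinear 0)
  rintro _ (rfl | ⟨m, hm, rfl⟩)
  · rfl
  · exact Pi.single_eq_of_ne (by omega) 1

lemma F_subset_coord_nonneg (d t : ℕ) (j : Fin d) : F d t ⊆ {x | 0 ≤ x j} := by
  refine convexHull_min ?_ (convex_halfSpace_ge (LinearMap.proj j).isLinear 0)
  rintro _ (rfl | ⟨m, -, rfl⟩)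
  · exact le_refl (0 : ℝ)
  · by_cases h : j = m <;> simp [h]

/-- Zeroing the coordinate `t` projects `F d (t + 1)` onto `F d t`. -/
lemma mem_F_of_mem_F_succ {d t : ℕ} (ht : t < d) {x : Fin d → ℝ} (hx : x ∈ F d (t + 1))
    (hxt : x ⟨t, ht⟩ = 0) : x ∈ F d t := by
  set j : Fin d := ⟨t, ht⟩
  let π : (Fin d → ℝ) →ₗ[ℝ] Fin d → ℝ := LinearMap.id - LinearMap.single ℝ _ j ∘ₗ LinearMap.proj j
  have hπ : ∀ y, π y = y - Pi.single j (y j) := fun y => rfl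
  have hπF : π '' F d (t + 1) ⊆ F d t := by
    rw [F, π.image_convexHull]
    refine convexHull_min ?_ (convex_convexHull ℝ _)
    rintro _ ⟨_, rfl | ⟨m, hm, rfl⟩, rfl⟩
    · rw [map_zero]; exact zero_mem_F d t
    · rcases eq_or_ne m j with rfl | hmj
      · simpa [hπ] using zero_mem_F d t
      · rw [hπ, Pi.single_eq_of_ne hmj.symm, Pi.single_zero, sub_zero]
        have hmt : (m : ℕ) ≠ t := fun h => hmj (Fin.ext h)
        exact subset_convexHull ℝ _ (mem_insert_of_mem _ ⟨m, by omega, rfl⟩)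
  simpa [hπ, hxt] using hπF (mem_image_of_mem π hx)

lemma S_subset_F {d i t : ℕ} (h : i ≤ t + 1) : S d i ⊆ F d t :=
  sdiff_subset.trans (F_mono d (by omega))

lemma S_of_le_one (d : ℕ) {i : ℕ} (h : i ≤ 1) : S d i = {0} := by
  simp [S, h, F_zero, show i - 1 = 0 by omega]

lemma S_add_two {d t : ℕ} (ht : t < d) : S d (t + 2) = {x ∈ F d (t + 1) | 0 < x ⟨t, ht⟩} := by
  ext x
  simp only [S, show ¬ t + 2 ≤ 1 by omega, if_false, Nat.add_sub_cancel, mem_sdiff, mem_ofPred_eq]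
  constructor
  · rintro ⟨hx, hxt⟩
    exact ⟨hx, (F_subset_coord_nonneg d _ _ hx).lt_of_ne fun h =>
      hxt (mem_F_of_mem_F_succ ht hx h.symm)⟩
  · rintro ⟨hx, hpos⟩
    exact ⟨hx, fun h => hpos.ne' (F_subset_coord_eq_zero le_rfl h)⟩

lemma S_add_two_eq_empty {d t : ℕ} (h : d ≤ t) : S d (t + 2) = ∅ := by
  have : basisPts d (t + 1) = basisPts d t := by
    ext x
    simp only [basisPts, mem_insert_iff, mem_ofPred_eq]
    exact or_congr_right ⟨fun ⟨m, _, hx⟩ => ⟨m, by omega, hx⟩, fun ⟨m, _, hx⟩ => ⟨m, by omega, hx⟩⟩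
  simp [S, F, this]

theorem union_S_convex_iff_erase_max_general (k : ℕ) (T : Finset ℕ)
    (hne : T.Nonempty) :
    Convex ℝ (⋃ i ∈ T, S (k - 1) i) ↔
      Convex ℝ (⋃ i ∈ T.filter (· < T.max' hne), S (k - 1) i) := by
  set A := ⋃ i ∈ T.filter (· < T.max' hne), S (k - 1) i
  have hA : ∀ {t}, T.max' hne ≤ t + 2 → A ⊆ F (k - 1) t := fun h =>
    iUnion₂_subset fun i hi => S_subset_F (by simp only [Finset.mem_filter] at hi; omega)
  have hsplit : ⋃ i ∈ T, S (k - 1) i = A ∪ S (k - 1) (T.max' hne) :=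
    T.set_biUnion_eq_filter_lt_max'_union hne _
  rw [hsplit]
  obtain hm | ⟨t, hm⟩ : T.max' hne ≤ 1 ∨ ∃ t, T.max' hne = t + 2 :=
    (le_or_gt _ 1).imp_right fun h => ⟨_, (Nat.sub_add_cancel h).symm⟩
  · have hA0 : A ⊆ {0} := F_zero (k - 1) ▸ hA (by omega)
    rw [S_of_le_one _ hm, union_eq_right.mpr hA0]
    exact iff_of_true (convex_singleton 0) (subsingleton_singleton.anti hA0).convex
  rw [hm]
  rcases lt_or_ge t (k - 1) with ht | ht
  · rw [S_add_two ht]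
    exact convex_union_sep_pos_iff (φ := LinearMap.proj ⟨t, ht⟩) (convex_convexHull ℝ _)
      ((hA hm.le).trans (F_mono _ t.le_succ)) fun x hx =>
        F_subset_coord_eq_zero le_rfl (hA hm.le hx)
  · rw [S_add_two_eq_empty ht, union_empty]

theorem union_S_convex_iff_erase_max (k : ℕ) (T : Finset ℕ)
    (hT : T ⊆ Finset.Icc 1 k) (hne : T.Nonempty) :
    Convex ℝ (⋃ i ∈ T, S (k - 1) i) ↔
      Convex ℝ (⋃ i ∈ T.filter (· < T.max' hne), S (k - 1) i) :=
  union_S_convex_iff_erase_max_general k T hne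
end

section
/- Let C be the set of subsets σ_1, ..., σ_k of {1, ..., n}, and define U_j = ⋃_{i : j ∈ σ_i} S_i in ℝ^{k-1}. Then for every nonempty σ ⊆ {1, ..., n}, the intersection ⋂_{j ∈ σ} U_j equals ⋃_{i : σ ⊆ σ_i} S_i. -/
open Set

open Function

theorem Set.biInter_iUnion_eq_iUnion_of_pairwise_disjoint {ι κ α : Type*} {s : ι → Set α}
    (hs : Pairwise (Disjoint on s)) (σs : ι → Set κ) {σ : Set κ} (hσ : σ.Nonempty) :
    ⋂ j ∈ σ, ⋃ i, ⋃ (_ : j ∈ σs i), s i = ⋃ i, ⋃ (_ : σ ⊆ σs i), s i := by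
  ext x
  simp only [mem_iInter, mem_iUnion]
  constructor
  · intro hx
    obtain ⟨j₀, hj₀⟩ := hσ
    obtain ⟨i₀, -, hxi₀⟩ := hx j₀ hj₀
    refine ⟨i₀, fun j hj => ?_, hxi₀⟩
    obtain ⟨i, hji, hxi⟩ := hx j hj
    obtain rfl : i = i₀ := hs.eq (not_disjoint_iff.mpr ⟨x, hxi, hxi₀⟩)
    exact hji
  · rintro ⟨i, hσi, hxi⟩ j hj
    exact ⟨i, hσi hj, hxi⟩

lemma F_mono_s5 (d : ℕ) : Monotone (F d) := fun _ _ h =>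
  convexHull_mono <| insert_subset_insert fun _ ⟨m, hm, hx⟩ => ⟨m, hm.trans_le h, hx⟩

lemma S_succ_subset_F (d i : ℕ) : S d (i + 1) ⊆ F d i :=
  sdiff_subset

lemma S_succ_eq_diff (d : ℕ) {i : ℕ} (hi : 0 < i) : S d (i + 1) = F d i \ F d (i - 1) := by
  simp [S, show ¬i + 1 ≤ 1 by omega, show i + 1 - 2 = i - 1 by omega]

lemma pairwise_disjoint_S_succ (d : ℕ) : Pairwise (Disjoint on fun i : ℕ => S d (i + 1)) := by
  refine (pairwise_disjoint_on _).mpr fun i i' hii' => ?_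
  rw [S_succ_eq_diff d (i.zero_le.trans_lt hii')]
  exact disjoint_sdiff_right.mono_left
    ((S_succ_subset_F d i).trans (F_mono_s5 d (Nat.le_sub_one_of_lt hii')))

theorem iInter_U_eq_union_S_general (n k : ℕ) (σs : Fin k → Finset (Fin n))
    (U : Fin n → Set (Fin (k - 1) → ℝ))
    (hU : ∀ j, U j = ⋃ i, ⋃ (_ : j ∈ σs i), S (k - 1) ((i : ℕ) + 1))
    (σ : Finset (Fin n)) (hσ : σ.Nonempty) :
    (⋂ j ∈ σ, U j) = ⋃ i, ⋃ (_ : σ ⊆ σs i), S (k - 1) ((i : ℕ) + 1) := by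
  have hdisj : Pairwise (Disjoint on fun i : Fin k => S (k - 1) ((i : ℕ) + 1)) :=
    (pairwise_disjoint_S_succ (k - 1)).comp_of_injective Fin.val_injective
  simp only [hU]
  simpa using Set.biInter_iUnion_eq_iUnion_of_pairwise_disjoint hdisj
    (fun i => (σs i : Set (Fin n))) (σ := σ) hσ

theorem iInter_U_eq_union_S (n k : ℕ) (σs : Fin k → Finset (Fin n))
    (hne : ∀ i, (σs i).Nonempty)
    (U : Fin n → Set (Fin (k - 1) → ℝ))
    (hU : ∀ j, U j = ⋃ i, ⋃ (_ : j ∈ σs i), S (k - 1) ((i : ℕ) + 1))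
    (σ : Finset (Fin n)) (hσ : σ.Nonempty) :
    (⋂ j ∈ σ, U j) = ⋃ i, ⋃ (_ : σ ⊆ σs i), S (k - 1) ((i : ℕ) + 1) :=
  iInter_U_eq_union_S_general n k σs U hU σ hσ
end

section
/- Every binary code is convex realizable: given any collection C of distinct nonempty subsets σ_1, ..., σ_k of {1, ..., n}, there exist convex sets U_1, ..., U_n ⊆ ℝ^{k-1} such that for every nonempty σ ⊆ {1, ..., n}, the region (⋂_{j ∈ σ} U_j) \ (⋃_{l ∉ σ} U_l) is nonempty if and only if σ ∈ C. -/
/-!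
Partition the closed nonnegative orthant of `ℝ^{k-1}` into `k` cells according to the position of
the first nonzero coordinate (the origin forming its own cell). On the orthant, a positive
combination of two points has as support the union of their supports, so its first nonzero
coordinate is the earlier of theirs; hence every union of cells is convex. Assigning the `i`-th
cell to the codeword `σᵢ` and letting `U_j` be the union of the cells whose codewords contain `j`,
the region cut out by `σ` is the union of the cells with codeword exactly `σ`.
-/

open Set Function

section CodeRealization

variable {X ι N : Type*}

/-- The set of neuron `j` when the cell `R i` carries the codeword `σs i`. -/
def codeRealization (R : ι → Set X) (σs : ι → Finset N) (j : N) : Set X :=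
  ⋃ i ∈ {i | j ∈ σs i}, R i

variable {R : ι → Set X} {σs : ι → Finset N} {x : X} {i : ι}

theorem mem_codeRealization_iff (hR : Pairwise (Disjoint on R)) (hx : x ∈ R i) (j : N) :
    x ∈ codeRealization R σs j ↔ j ∈ σs i := by
  simp only [codeRealization, mem_iUnion₂, mem_ofPred_eq]
  constructor
  · rintro ⟨i', hj, hx'⟩
    rwa [hR.eq (not_disjoint_iff.mpr ⟨x, hx', hx⟩)] at hj
  · exact fun hj => ⟨i, hj, hx⟩

variable [Fintype N] [DecidableEq N]

theorem mem_region_codeRealization_iff (hR : Pairwise (Disjoint on R)) (hx : x ∈ R i)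
    (σ : Finset N) :
    x ∈ (⋂ j ∈ σ, codeRealization R σs j) \ ⋃ l ∈ σᶜ, codeRealization R σs l ↔ σ = σs i := by
  simp only [mem_sdiff, mem_iInter₂, mem_iUnion₂, mem_codeRealization_iff hR hx, Finset.mem_compl,
    not_exists, Finset.ext_iff]
  exact ⟨fun ⟨hsub, hsup⟩ j => ⟨hsub j, fun hj => by_contra fun hjσ => hsup j hjσ hj⟩,
    fun h => ⟨fun j => (h j).1, fun l hl hli => hl ((h l).2 hli)⟩⟩

theorem region_codeRealization_nonempty_iff (hR : Pairwise (Disjoint on R))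
    (hne : ∀ i, (R i).Nonempty) {σ : Finset N} (hσ : σ.Nonempty) :
    ((⋂ j ∈ σ, codeRealization R σs j) \ ⋃ l ∈ σᶜ, codeRealization R σs l).Nonempty ↔
      ∃ i, σ = σs i := by
  constructor
  · rintro ⟨x, hx⟩
    obtain ⟨j, hj⟩ := hσ
    obtain ⟨i, -, hxi⟩ := mem_iUnion₂.mp (mem_iInter₂.mp hx.1 j hj)
    exact ⟨i, (mem_region_codeRealization_iff hR hxi σ).mp hx⟩
  · rintro ⟨i, rfl⟩
    obtain ⟨x, hx⟩ := hne i
    exact ⟨x, (mem_region_codeRealization_iff hR hx _).mpr rfl⟩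

end CodeRealization

section OrthantCell

variable {d : ℕ}

/-- `⊤` for `x = 0`. -/
noncomputable def leadingIndex (x : Fin d → ℝ) : WithTop (Fin d) :=
  (Finset.univ.filter fun m => x m ≠ 0).min

theorem leadingIndex_zero : leadingIndex (0 : Fin d → ℝ) = ⊤ := by
  simp [leadingIndex]

theorem leadingIndex_single (m : Fin d) : leadingIndex (Pi.single m (1 : ℝ)) = m := by
  have : (Finset.univ.filter fun m' => (Pi.single m (1 : ℝ) : Fin d → ℝ) m' ≠ 0) = {m} := by
    ext m'
    by_cases h : m' = m <;> simp [h]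
  rw [leadingIndex, this, Finset.min_singleton]

theorem leadingIndex_smul_add_smul {x y : Fin d → ℝ} (hx : 0 ≤ x) (hy : 0 ≤ y) {a b : ℝ}
    (ha : 0 < a) (hb : 0 < b) :
    leadingIndex (a • x + b • y) = min (leadingIndex x) (leadingIndex y) := by
  have hsupp : ∀ m, (a • x + b • y) m ≠ 0 ↔ x m ≠ 0 ∨ y m ≠ 0 := fun m => by
    simp only [Pi.add_apply, Pi.smul_apply, smul_eq_mul, ne_eq,
      add_eq_zero_iff_of_nonneg (mul_nonneg ha.le (hx m)) (mul_nonneg hb.le (hy m)),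
      mul_eq_zero, ha.ne', hb.ne', false_or, not_and_or]
  simp only [leadingIndex, hsupp, Finset.filter_or]
  exact Finset.min_union

def orthantCell (t : WithTop (Fin d)) : Set (Fin d → ℝ) :=
  {x | 0 ≤ x ∧ leadingIndex x = t}

theorem orthantCell_nonempty : ∀ t : WithTop (Fin d), (orthantCell t).Nonempty
  | ⊤ => ⟨0, le_rfl, leadingIndex_zero⟩
  | (m : Fin d) => ⟨Pi.single m 1, Pi.single_nonneg.mpr zero_le_one, leadingIndex_single m⟩

theorem pairwise_disjoint_orthantCell : Pairwise (Disjoint on (orthantCell (d := d))) :=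
  fun _ _ hst => disjoint_left.mpr fun _ hs ht => hst (hs.2.symm.trans ht.2)

theorem convex_biUnion_orthantCell {ι : Type*} (f : ι → WithTop (Fin d)) (S : Set ι) :
    Convex ℝ (⋃ i ∈ S, orthantCell (f i)) := by
  have hunion : (⋃ i ∈ S, orthantCell (f i)) = {x | 0 ≤ x ∧ leadingIndex x ∈ f '' S} := by
    ext x
    simp only [orthantCell, mem_iUnion₂, mem_ofPred_eq, mem_image]
    exact ⟨fun ⟨i, hi, hx, hxi⟩ => ⟨hx, i, hi, hxi.symm⟩,
      fun ⟨hx, i, hi, hxi⟩ => ⟨i, hi, hx, hxi.symm⟩⟩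
  rw [hunion, convex_iff_forall_pos]
  rintro x ⟨hx, hxS⟩ y ⟨hy, hyS⟩ a b ha hb -
  refine ⟨add_nonneg (smul_nonneg ha.le hx) (smul_nonneg hb.le hy), ?_⟩
  rw [leadingIndex_smul_add_smul hx hy ha hb]
  rcases min_choice (leadingIndex x) (leadingIndex y) with h | h <;> rw [h] <;> assumption

end OrthantCell

theorem exists_injective_fin_withTop (k : ℕ) :
    ∃ e : Fin k → WithTop (Fin (k - 1)), Function.Injective e := by
  cases k with
  | zero => exact ⟨Fin.elim0, fun i => i.elim0⟩
  | succ m => exact ⟨finSuccEquivLast, finSuccEquivLast.injective⟩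

theorem every_code_convex_realizable_general (n k : ℕ) (σs : Fin k → Finset (Fin n)) :
    ∃ U : Fin n → Set (Fin (k - 1) → ℝ),
      (∀ j, Convex ℝ (U j)) ∧
      ∀ σ : Finset (Fin n), σ.Nonempty →
        (((⋂ j ∈ σ, U j) \ ⋃ l ∈ σᶜ, U l).Nonempty ↔ ∃ i, σ = σs i) := by
  obtain ⟨e, he⟩ := exists_injective_fin_withTop k
  refine ⟨codeRealization (orthantCell ∘ e) σs, fun j => convex_biUnion_orthantCell e _,
    fun σ hσ => region_codeRealization_nonempty_iff ?_ (fun i => orthantCell_nonempty (e i)) hσ⟩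
  exact pairwise_disjoint_orthantCell.comp_of_injective he

theorem every_code_convex_realizable (n k : ℕ) (σs : Fin k → Finset (Fin n))
    (hne : ∀ i, (σs i).Nonempty) (hinj : Function.Injective σs) :
    ∃ U : Fin n → Set (Fin (k - 1) → ℝ),
      (∀ j, Convex ℝ (U j)) ∧
      ∀ σ : Finset (Fin n), σ.Nonempty →
        (((⋂ j ∈ σ, U j) \ ⋃ l ∈ σᶜ, U l).Nonempty ↔ ∃ i, σ = σs i) :=
  every_code_convex_realizable_general n k σs
end

section
/- The code C_n = { σ ⊆ {1,...,n} : |σ| = n−1 } has no convex realization in ℝ^k for any k ≤ n − 2. That is, there do not exist convex sets U_1, ..., U_n ⊆ ℝ^k such that every intersection of n−1 of the sets contains a point avoiding the remaining set, while ⋂_{i=1}^n U_i = ∅. -/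
open Set Module

theorem Convex.iInter_nonempty_of_iInter_ne_nonempty {𝕜 E ι : Type*} [Field 𝕜] [LinearOrder 𝕜]
    [IsStrictOrderedRing 𝕜] [AddCommGroup E] [Module 𝕜 E] [FiniteDimensional 𝕜 E] [Fintype ι]
    {F : ι → Set E} (h_card : finrank 𝕜 E + 1 < Fintype.card ι)
    (h_convex : ∀ i, Convex 𝕜 (F i)) (h_inter : ∀ i, (⋂ (j) (_ : j ≠ i), F j).Nonempty) :
    (⋂ i, F i).Nonempty := by
  classical
  -- A subfamily of at most `finrank E + 1` members omits some member, so Helly's hypothesis holds.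
  have h := Convex.helly_theorem' (s := Finset.univ) (fun i _ ↦ h_convex i) fun I _ hI ↦ by
    obtain ⟨i, hi⟩ : ∃ i, i ∉ I := by
      by_contra! h_all
      exact (I.card_lt_iff_ne_univ.mp (hI.trans_lt h_card)) (Finset.eq_univ_of_forall h_all)
    refine (h_inter i).mono (biInter_mono (fun j hj ↦ ?_) fun _ _ ↦ subset_rfl)
    rintro rfl
    exact hi hj
  simpa using h

theorem Cn_not_realizable_low_dim_general (n k : ℕ) (hk : k + 2 ≤ n) :
    ¬ ∃ U : Fin n → Set (Fin k → ℝ),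
        (∀ i, Convex ℝ (U i)) ∧
        (∀ i : Fin n, ((⋂ j ∈ ({i}ᶜ : Finset (Fin n)), U j) \ U i).Nonempty) ∧
        (⋂ i, U i) = ∅ := by
  rintro ⟨U, h_convex, h_codewords, h_empty⟩
  have h_card : finrank ℝ (Fin k → ℝ) + 1 < Fintype.card (Fin n) := by
    simp only [finrank_fin_fun, Fintype.card_fin]; omega
  refine (Convex.iInter_nonempty_of_iInter_ne_nonempty h_card h_convex fun i ↦ ?_).ne_empty h_empty
  simpa using (h_codewords i).mono sdiff_subset

theorem Cn_not_realizable_low_dim (n k : ℕ) (hn : 2 ≤ n) (hk : k + 2 ≤ n) :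
    ¬ ∃ U : Fin n → Set (Fin k → ℝ),
        (∀ i, Convex ℝ (U i)) ∧
        (∀ i : Fin n, ((⋂ j ∈ ({i}ᶜ : Finset (Fin n)), U j) \ U i).Nonempty) ∧
        (⋂ i, U i) = ∅ :=
  Cn_not_realizable_low_dim_general n k hk
end

section
/- The minimal convex embedding dimension of C_n = { σ ⊆ {1,...,n} : |σ| = n−1 } is exactly n − 1: it has a convex realization in ℝ^{n−1} but none in ℝ^{n−2}. -/
/-!
Lower bound: if the sets `U i` realize `C_n` in `ℝ^d` with `d ≤ n - 2`, then every `n - 1` of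
them meet (in a point of the atom of `{i}ᶜ`), so by Helly's theorem all `n` of them meet; a
common point lies in the atom of the full set, which is not a codeword.

Upper bound: on the nonnegative orthant of `ℝ^(n-1)` let `topSupport x` be one more than the
last index where `x` is nonzero (and `0` at the origin). It takes all `n` values, and a positive
combination of two nonnegative vectors has the larger of their two values, so each set
`{x ≥ 0 | topSupport x ≠ i}` is convex. These `n` sets realize `C_n`: a point misses exactly one
of them.
-/

open Set

/-- `C` is convex realizable in ℝ^d with some stimulus space `X`. -/
def Realizes (n d : ℕ) (C : Set (Finset (Fin n))) : Prop :=
  ∃ (X : Set (Fin d → ℝ)) (U : Fin n → Set (Fin d → ℝ)),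
    (∀ i, Convex ℝ (U i) ∧ U i ⊆ X) ∧
    ∀ σ : Finset (Fin n),
      (σ ∈ C ↔ ((X ∩ ⋂ j ∈ σ, U j) \ ⋃ l ∈ σᶜ, U l).Nonempty)

theorem Finset.card_eq_sub_one_iff_exists_eq_compl_singleton {n : ℕ} (hn : 0 < n)
    (σ : Finset (Fin n)) : σ.card = n - 1 ↔ ∃ i, σ = {i}ᶜ := by
  have hle : σ.card ≤ n := by simpa using Finset.card_le_univ σ
  have hcompl : σᶜ.card = n - σ.card := by simp [Finset.card_compl]
  simp_rw [eq_compl_comm (x := σ), eq_comm (b := σᶜ), ← Finset.card_eq_one]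
  omega

theorem Convex.sep_ne_of_map_smul_add_smul_eq_or {𝕜 E F : Type*} [Semiring 𝕜] [PartialOrder 𝕜]
    [AddCommMonoid E] [Module 𝕜 E] {X : Set E} (hX : Convex 𝕜 X) {h : E → F}
    (hh : ∀ x ∈ X, ∀ y ∈ X, ∀ a b : 𝕜, 0 < a → 0 < b →
      h (a • x + b • y) = h x ∨ h (a • x + b • y) = h y) (i : F) :
    Convex 𝕜 {x ∈ X | h x ≠ i} := by
  rintro x ⟨hxX, hxi⟩ y ⟨hyX, hyi⟩ a b ha hb hab
  refine ⟨hX hxX hyX ha hb hab, ?_⟩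
  rcases ha.eq_or_lt with rfl | ha
  · simpa [show b = 1 by simpa using hab] using hyi
  rcases hb.eq_or_lt with rfl | hb
  · simpa [show a = 1 by simpa using hab] using hxi
  rcases hh x hxX y hyX a b ha hb with hxy | hxy <;> rwa [hxy]

theorem realizes_compl_singletons_of_surjOn {n d : ℕ} {X : Set (Fin d → ℝ)}
    {h : (Fin d → ℝ) → Fin n} (hconv : ∀ i, Convex ℝ {x ∈ X | h x ≠ i})
    (hsurj : SurjOn h X univ) : Realizes n d {σ | σ.card = n - 1} := by
  have mem_atom_iff : ∀ (σ : Finset (Fin n)) x, x ∈ (X ∩ ⋂ j ∈ σ, {x ∈ X | h x ≠ j}) \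
      ⋃ l ∈ σᶜ, {x ∈ X | h x ≠ l} ↔ x ∈ X ∧ σ = {h x}ᶜ := by
    intro σ x
    simp only [mem_sdiff, mem_inter_iff, mem_iInter, mem_iUnion, mem_ofPred_eq,
      Finset.mem_compl, Finset.ext_iff, Finset.mem_singleton]
    grind
  refine ⟨X, fun i => {x ∈ X | h x ≠ i}, fun i => ⟨hconv i, sep_subset _ _⟩, fun σ => ?_⟩
  simp_rw [Set.Nonempty, mem_atom_iff, mem_ofPred_eq,
    Finset.card_eq_sub_one_iff_exists_eq_compl_singleton (h 0).pos]
  constructor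
  · rintro ⟨i, rfl⟩
    obtain ⟨x, hxX, rfl⟩ := hsurj (mem_univ i)
    exact ⟨x, hxX, rfl⟩
  · rintro ⟨x, -, rfl⟩
    exact ⟨h x, rfl⟩

noncomputable def topSupport {m : ℕ} (x : Fin m → ℝ) : Fin (m + 1) :=
  Finset.univ.sup fun k => if x k = 0 then 0 else k.succ

theorem topSupport_smul_add_smul {m : ℕ} {x y : Fin m → ℝ} (hx : 0 ≤ x) (hy : 0 ≤ y) {a b : ℝ}
    (ha : 0 < a) (hb : 0 < b) : topSupport (a • x + b • y) = topSupport x ⊔ topSupport y := by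
  simp only [topSupport, ← Finset.sup_sup]
  congr 1
  funext k
  have hzero : a * x k + b * y k = 0 ↔ x k = 0 ∧ y k = 0 := by
    rw [add_eq_zero_iff_of_nonneg (mul_nonneg ha.le (hx k)) (mul_nonneg hb.le (hy k)),
      mul_eq_zero, mul_eq_zero]
    simp [ha.ne', hb.ne']
  simp only [Pi.add_apply, Pi.smul_apply, smul_eq_mul, Pi.sup_apply, hzero]
  by_cases hxk : x k = 0 <;> by_cases hyk : y k = 0 <;> simp [hxk, hyk]

theorem topSupport_zero {m : ℕ} : topSupport (0 : Fin m → ℝ) = 0 := by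
  simp [topSupport]

theorem topSupport_single {m : ℕ} (j : Fin m) : topSupport (Pi.single j (1 : ℝ)) = j.succ := by
  refine le_antisymm (Finset.sup_le fun k _ => ?_) ?_
  · by_cases hk : k = j <;> simp [hk]
  · exact (Finset.le_sup (Finset.mem_univ j)).trans_eq' (by simp)

theorem realizes_compl_singletons (m : ℕ) : Realizes (m + 1) m {σ | σ.card = m} := by
  refine realizes_compl_singletons_of_surjOn (X := Ici 0) (h := topSupport)
    ((convex_Ici 0).sep_ne_of_map_smul_add_smul_eq_or fun x hx y hy a b ha hb => ?_) ?_
  · rw [topSupport_smul_add_smul hx hy ha hb]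
    exact max_choice _ _
  · intro i _
    induction i using Fin.cases with
    | zero => exact ⟨0, self_mem_Ici, topSupport_zero⟩
    | succ j =>
      exact ⟨Pi.single j 1, Pi.single_nonneg.2 zero_le_one, topSupport_single j⟩

theorem not_realizes_compl_singletons {n d : ℕ} (hd : d + 2 ≤ n) :
    ¬ Realizes n d {σ | σ.card = n - 1} := by
  rintro ⟨X, U, hU, hcode⟩
  have hmissing : ∀ i₀, (⋂ j ∈ ({i₀}ᶜ : Finset (Fin n)), U j).Nonempty := fun i₀ =>
    (((hcode _).mp (by simp [Finset.card_compl])).mono sdiff_subset).mono inter_subset_right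
  obtain ⟨q, hq⟩ : (⋂ i ∈ Finset.univ, U i).Nonempty := by
    refine Convex.helly_theorem' (fun i _ => (hU i).1) fun I _ hI => ?_
    rw [Module.finrank_fin_fun] at hI
    obtain ⟨i₀, -, hi₀⟩ := Finset.exists_mem_notMem_of_card_lt_card
      (s := I) (t := Finset.univ) (by rw [Finset.card_univ, Fintype.card_fin]; omega)
    refine (hmissing i₀).mono (biInter_subset_biInter_left fun i hi => ?_)
    simpa using ne_of_mem_of_not_mem hi hi₀
  have hqX : q ∈ X := (hU ⟨0, by omega⟩).2 (mem_iInter₂.mp hq _ (Finset.mem_univ _))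
  have hfull := (hcode Finset.univ).mpr ⟨q, ⟨hqX, hq⟩, by simp⟩
  simp only [mem_ofPred_eq, Finset.card_univ, Fintype.card_fin] at hfull
  omega

theorem Cn_min_embedding_dim (n : ℕ) (hn : 2 ≤ n) :
    Realizes n (n - 1) {σ | σ.card = n - 1} ∧
    ¬ Realizes n (n - 2) {σ | σ.card = n - 1} := by
  obtain ⟨m, rfl⟩ : ∃ m, n = m + 1 := ⟨n - 1, by omega⟩
  exact ⟨by simpa using realizes_compl_singletons m, not_realizes_compl_singletons (by omega)⟩
end

section
/- For every d ∈ ℕ, there exists a binary code whose minimal convex embedding dimension exceeds d. In particular, the minimal convex embedding dimension over all binary codes is unbounded. -/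
/-!
The code of all nonempty proper subsets of `{1, …, n}` is realized in `ℝⁿ` by the facets
`{x i = 0}` of the standard simplex: a point of the simplex lies in exactly the facets indexed by
its zero set, and the zero sets of boundary points are exactly the nonempty proper subsets.
In a realization in `ℝᵉ` with `e + 2 ≤ n`, any `n - 1` of the convex sets meet (the codewords
`{i}ᶜ`) while all `n` do not (`univ` is not a codeword), contradicting Helly's theorem.
-/

open Set

open Module in
theorem Convex.iInter_nonempty_of_forall_iInter_ne_nonempty {ι 𝕜 E : Type*} [Fintype ι]
    [Field 𝕜] [LinearOrder 𝕜] [IsStrictOrderedRing 𝕜] [AddCommGroup E] [Module 𝕜 E]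
    [FiniteDimensional 𝕜 E] {F : ι → Set E} (hF : ∀ i, Convex 𝕜 (F i))
    (hcard : finrank 𝕜 E + 1 < Fintype.card ι) (h : ∀ i, (⋂ (j) (_ : j ≠ i), F j).Nonempty) :
    (⋂ i, F i).Nonempty := by
  have := helly_theorem' (s := Finset.univ) (fun i _ => hF i) fun I _ hI => by
    obtain ⟨i, -, hi⟩ := Finset.exists_mem_notMem_of_card_lt_card (s := I) (t := Finset.univ)
      (by simpa using hI.trans_lt hcard)
    exact (h i).mono <| biInter_subset_biInter_left fun j hj => ne_of_mem_of_not_mem hj hi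
  simpa using this

section StdSimplexFace

variable {ι : Type*} [Fintype ι]

theorem exists_mem_stdSimplex_forall_eq_zero_iff {s : Finset ι} (hs : s ≠ Finset.univ) :
    ∃ x ∈ stdSimplex ℝ ι, ∀ i, x i = 0 ↔ i ∈ s := by
  classical
  have hcard : (0 : ℝ) < (sᶜ.card : ℝ) := by
    exact_mod_cast Finset.card_pos.2 (by simpa [Finset.nonempty_iff_ne_empty] using hs)
  refine ⟨fun i => if i ∈ s then 0 else (sᶜ.card : ℝ)⁻¹, ⟨fun i => by positivity, ?_⟩, fun i => ?_⟩
  · rw [Finset.sum_ite, Finset.sum_const_zero, zero_add, Finset.sum_const, nsmul_eq_mul]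
    simp [← Finset.compl_filter, hcard.ne']
  · by_cases hi : i ∈ s <;> simp [hi, hcard.ne']

variable (ι) in
def stdSimplexFace (i : ι) : Set (ι → ℝ) := stdSimplex ℝ ι ∩ {x | x i = 0}

theorem convex_stdSimplexFace (i : ι) : Convex ℝ (stdSimplexFace ι i) :=
  (convex_stdSimplex ℝ ι).inter (convex_hyperplane (LinearMap.proj i).isLinear 0)

theorem mem_stdSimplexFace_atom_iff [DecidableEq ι] {σ : Finset ι} {x : ι → ℝ} :
    x ∈ ((⋃ i, stdSimplexFace ι i) ∩ ⋂ j ∈ σ, stdSimplexFace ι j) \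
        ⋃ l ∈ σᶜ, stdSimplexFace ι l ↔
      x ∈ stdSimplex ℝ ι ∧ σ.Nonempty ∧ ∀ j, x j = 0 ↔ j ∈ σ := by
  simp only [stdSimplexFace, mem_sdiff, mem_inter_iff, mem_iUnion, mem_iInter, mem_ofPred_eq,
    Finset.mem_compl, not_exists, not_and]
  constructor
  · rintro ⟨⟨⟨i, hx, hi⟩, hσ⟩, hout⟩
    have hzero : ∀ j, x j = 0 → j ∈ σ := fun j hj => by_contra fun hjσ => hout j hjσ hx hj
    exact ⟨hx, ⟨i, hzero i hi⟩, fun j => ⟨hzero j, fun hj => (hσ j hj).2⟩⟩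
  · rintro ⟨hx, ⟨i, hi⟩, hzero⟩
    exact ⟨⟨⟨i, hx, (hzero i).2 hi⟩, fun j hj => ⟨hx, (hzero j).2 hj⟩⟩,
      fun l hl _ h => hl ((hzero l).1 h)⟩

end StdSimplexFace

def simplexBoundaryCode (n : ℕ) : Set (Finset (Fin n)) := {σ | σ.Nonempty ∧ σ ≠ Finset.univ}

theorem realizes_simplexBoundaryCode (n : ℕ) : Realizes n n (simplexBoundaryCode n) := by
  refine ⟨⋃ i, stdSimplexFace _ i, stdSimplexFace _,
    fun i => ⟨convex_stdSimplexFace i, subset_iUnion _ i⟩, fun σ => ?_⟩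
  simp only [Set.Nonempty, mem_stdSimplexFace_atom_iff]
  constructor
  · rintro ⟨hne, huniv⟩
    obtain ⟨x, hx, hzero⟩ := exists_mem_stdSimplex_forall_eq_zero_iff huniv
    exact ⟨x, hx, hne, hzero⟩
  · rintro ⟨x, hx, hne, hzero⟩
    refine ⟨hne, ?_⟩
    rintro rfl
    simpa [fun j => (hzero j).2 (Finset.mem_univ j)] using hx.2

theorem not_realizes_simplexBoundaryCode {n e : ℕ} (h : e + 1 < n) :
    ¬ Realizes n e (simplexBoundaryCode n) := by
  rintro ⟨X, U, hU, hatoms⟩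
  have hcompl : ∀ i, (⋂ (j) (_ : j ≠ i), U j).Nonempty := fun i => by
    have : Nontrivial (Fin n) := Fin.nontrivial_iff_two_le.2 (by omega)
    obtain ⟨x, ⟨-, hx⟩, -⟩ := (hatoms {i}ᶜ).1 ⟨by simp [Finset.nonempty_iff_ne_empty], by simp⟩
    exact ⟨x, by simpa using hx⟩
  obtain ⟨x, hx⟩ := Convex.iInter_nonempty_of_forall_iInter_ne_nonempty (fun i => (hU i).1)
    (by simpa using h) hcompl
  have huniv := (hatoms Finset.univ).2
    ⟨x, ⟨(hU ⟨0, by omega⟩).2 (mem_iInter.1 hx _), by simpa using hx⟩, by simp⟩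
  exact huniv.2 rfl

theorem embedding_dim_unbounded (d : ℕ) :
    ∃ (n : ℕ) (C : Set (Finset (Fin n))),
      (∃ e, Realizes n e C) ∧ ∀ e ≤ d, ¬ Realizes n e C :=
  ⟨d + 2, simplexBoundaryCode (d + 2), ⟨d + 2, realizes_simplexBoundaryCode _⟩,
    fun _ he => not_realizes_simplexBoundaryCode (by omega)⟩
end

section
/- Let A = conv{v_0, ..., v_m} be a simplex in ℝ^d with facet F = conv{v_0, ..., v_{m−1}}, let B ⊆ F be convex, and let S = A \ F. Then B ∪ S is convex. -/
/-!
The facet `F` is a face (an extreme subset) of the simplex `A`: if a point of `F` lies inside an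
open segment of `A`, its barycentric coordinates are a positive combination of those of the
endpoints; by affine independence they vanish off the vertices of `F`, and since all coordinates
are nonnegative, so do those of the endpoints. For any face `F` of a convex set `A`, an open
segment with an endpoint in `A \ F` cannot meet `F`, so adding a convex `B ⊆ F` to `A \ F`
keeps it convex.
-/

open Set

section OrderedSemiring

variable {𝕜 E : Type*} [Semiring 𝕜] [PartialOrder 𝕜] [IsOrderedRing 𝕜]
  [AddCommMonoid E] [Module 𝕜 E]

theorem Convex.union_sdiff_of_isExtreme {A F B : Set E} (hA : Convex 𝕜 A)
    (hAF : IsExtreme 𝕜 A F) (hB : Convex 𝕜 B) (hBF : B ⊆ F) : Convex 𝕜 (B ∪ A \ F) := by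
  have hBA : B ⊆ A := hBF.trans hAF.subset
  have hsdiff : ∀ ⦃x y z⦄, x ∈ A → y ∈ A → x ∉ F → z ∈ openSegment 𝕜 x y → z ∈ A \ F :=
    fun x y z hx hy hxF hz => ⟨hA.openSegment_subset hx hy hz,
      fun hzF => hxF (hAF.left_mem_of_mem_openSegment hx hy hzF hz)⟩
  refine convex_iff_openSegment_subset.2 ?_
  rintro x (hxB | ⟨hxA, hxF⟩) y (hyB | ⟨hyA, hyF⟩) z hz
  · exact Or.inl (hB.openSegment_subset hxB hyB hz)
  · rw [openSegment_symm] at hz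
    exact Or.inr (hsdiff hyA (hBA hxB) hyF hz)
  · exact Or.inr (hsdiff hxA (hBA hyB) hxF hz)
  · exact Or.inr (hsdiff hxA hyA hxF hz)

end OrderedSemiring

section Ring

variable {𝕜 E ι : Type*} [Ring 𝕜] [PartialOrder 𝕜] [AddCommGroup E] [Module 𝕜 E] [Fintype ι]
  {v : ι → E}

theorem AffineIndependent.eq_zero_of_linearCombination_mem_convexHull_image
    (hv : AffineIndependent 𝕜 v) {w : ι → 𝕜} (hw : ∑ i, w i = 1) {s : Set ι}
    (hws : Fintype.linearCombination 𝕜 v w ∈ convexHull 𝕜 (v '' s)) {i : ι} (hi : i ∉ s) :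
    w i = 0 := by
  refine hv.eq_zero_of_affineCombination_mem_affineSpan hw ?_ (Finset.mem_univ i) hi
  rw [Finset.affineCombination_eq_linear_combination _ _ _ hw]
  exact convexHull_subset_affineSpan _ hws

end Ring

section LinearOrderedField

variable {𝕜 E ι : Type*} [Field 𝕜] [LinearOrder 𝕜] [IsStrictOrderedRing 𝕜]
  [AddCommGroup E] [Module 𝕜 E] [Fintype ι] {v : ι → E}

theorem convexHull_range_eq_image_stdSimplex (v : ι → E) :
    convexHull 𝕜 (range v) = Fintype.linearCombination 𝕜 v '' stdSimplex 𝕜 ι := by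
  classical
  rw [← convexHull_rangle_single_eq_stdSimplex, LinearMap.image_convexHull, ← range_comp]
  congr 1
  ext i
  simp

theorem linearCombination_mem_convexHull_image {w : ι → 𝕜} (hw : w ∈ stdSimplex 𝕜 ι)
    {s : Set ι} (hws : ∀ i ∉ s, w i = 0) :
    Fintype.linearCombination 𝕜 v w ∈ convexHull 𝕜 (v '' s) := by
  classical
  have hsupp : ∀ i ∈ Finset.univ, w i ≠ 0 → i ∈ s := fun i _ => not_imp_comm.1 (hws i)
  have hsum : ∑ i with i ∈ s, w i = 1 := (Finset.sum_filter_of_ne hsupp).trans hw.2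
  rw [Fintype.linearCombination_apply,
    ← Finset.sum_filter_of_ne fun i hi hne => hsupp i hi (left_ne_zero_of_smul hne)]
  exact (convex_convexHull 𝕜 _).sum_mem (fun i _ => hw.1 i) hsum
    fun i hi => subset_convexHull 𝕜 _ (mem_image_of_mem v (Finset.mem_filter.1 hi).2)

theorem AffineIndependent.isExtreme_convexHull_image (hv : AffineIndependent 𝕜 v) (s : Set ι) :
    IsExtreme 𝕜 (convexHull 𝕜 (range v)) (convexHull 𝕜 (v '' s)) := by
  refine ⟨convexHull_mono (image_subset_range v s), ?_⟩
  rw [convexHull_range_eq_image_stdSimplex]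
  rintro _ ⟨wx, hwx, rfl⟩ _ ⟨wy, hwy, rfl⟩ z hzs ⟨a, b, ha, hb, hab, rfl⟩
  refine linearCombination_mem_convexHull_image hwx fun i hi => ?_
  rw [← map_smul, ← map_smul, ← map_add] at hzs
  have hw : ∑ i, (a • wx + b • wy) i = 1 := by
    simp [Finset.sum_add_distrib, ← Finset.mul_sum, hwx.2, hwy.2, hab]
  have hzi : a * wx i + b * wy i = 0 := by
    simpa using hv.eq_zero_of_linearCombination_mem_convexHull_image hw hzs hi
  have hxi := ((add_eq_zero_iff_of_nonneg (mul_nonneg ha.le (hwx.1 i))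
    (mul_nonneg hb.le (hwy.1 i))).1 hzi).1
  exact (mul_eq_zero.1 hxi).resolve_left ha.ne'

end LinearOrderedField

theorem union_with_simplex_minus_facet_convex (d m : ℕ)
    (v : Fin (m + 1) → (Fin d → ℝ)) (hv : AffineIndependent ℝ v)
    (B : Set (Fin d → ℝ)) (hB : Convex ℝ B)
    (hBF : B ⊆ convexHull ℝ (v '' {i | (i : ℕ) < m})) :
    Convex ℝ (B ∪
      (convexHull ℝ (Set.range v) \ convexHull ℝ (v '' {i | (i : ℕ) < m}))) :=
  (convex_convexHull ℝ _).union_sdiff_of_isExtreme (hv.isExtreme_convexHull_image _) hB hBF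
end

section
/- Let C be a code on n neurons realized in ℝ¹ by intervals I_1, ..., I_n (each convex, i.e., an interval, not necessarily open or closed), and suppose no two distinct interval endpoints coincide unless equal. Define ε as the smallest nonzero distance between any two endpoints, and for each k let I_k' be the open interval obtained by moving each closed endpoint of I_k outward by ε/3 and each open endpoint inward by ε/3. Then for any codeword σ realized by the I_k over a subinterval of positive length, σ is also realized by the open intervals I_k'. -/
/-!
Pick a point `y` of `(c, d)` that is not an endpoint, and let `x` be the midpoint of the gap
between the endpoints nearest to `y` on either side. Since distinct endpoints are at least `ε`
apart, `x` is at distance at least `ε / 2` from every endpoint, so moving any endpoint by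
`ε / 3` cannot carry it across `x`: `x ∈ I'_k ↔ x ∈ I_k`. And since no endpoint lies between
`x` and `y`, `x ∈ I_k ↔ y ∈ I_k`. Hence `x` realizes in the `I'_k` the codeword that `y`
realizes in the `I_k`.
-/

open Set

section Endpoints

variable (closed : Bool) {a b x y δ : ℝ}

theorem ite_le_lt_left_iff_of_notMem_uIcc (h : a ∉ uIcc x y) :
    (if closed then a ≤ x else a < x) ↔ (if closed then a ≤ y else a < y) := by
  rw [mem_uIcc] at h
  cases closed <;> simp only [Bool.false_eq_true, if_true, if_false] <;>
    grind

theorem ite_le_lt_right_iff_of_notMem_uIcc (h : b ∉ uIcc x y) :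
    (if closed then x ≤ b else x < b) ↔ (if closed then y ≤ b else y < b) := by
  rw [mem_uIcc] at h
  cases closed <;> simp only [Bool.false_eq_true, if_true, if_false] <;>
    grind

theorem ite_le_lt_left_iff_shift (hδ : 0 ≤ δ) (h : δ < |x - a|) :
    (if closed then a ≤ x else a < x) ↔ (if closed then a - δ else a + δ) < x := by
  cases closed <;> simp only [Bool.false_eq_true, if_true, if_false] <;>
    constructor <;> intro <;> cases abs_cases (x - a) <;> linarith

theorem ite_le_lt_right_iff_shift (hδ : 0 ≤ δ) (h : δ < |x - b|) :
    (if closed then x ≤ b else x < b) ↔ x < (if closed then b + δ else b - δ) := by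
  cases closed <;> simp only [Bool.false_eq_true, if_true, if_false] <;>
    constructor <;> intro <;> cases abs_cases (x - b) <;> linarith

end Endpoints

theorem exists_far_point_in_same_gap {E : Finset ℝ} {ε y : ℝ} (hε : 0 < ε)
    (hsep : ∀ p ∈ E, ∀ q ∈ E, p ≠ q → ε ≤ |p - q|) (hy : y ∉ E) :
    ∃ x, ∀ e ∈ E, ε / 2 ≤ |x - e| ∧ e ∉ uIcc x y := by
  -- `p`, `q`: the elements of `E` nearest to `y` on each side (`y ∓ ε` if there are none).
  set p := (insert (y - ε) (E.filter (· < y))).max' (Finset.insert_nonempty _ _)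
  set q := (insert (y + ε) (E.filter (y < ·))).min' (Finset.insert_nonempty _ _)
  have hpy : p < y := by
    refine (Finset.max'_lt_iff _ _).2 fun z hz => ?_
    rcases Finset.mem_insert.1 hz with rfl | hz
    · linarith
    · exact (Finset.mem_filter.1 hz).2
  have hyq : y < q := by
    refine (Finset.lt_min'_iff _ _).2 fun z hz => ?_
    rcases Finset.mem_insert.1 hz with rfl | hz
    · linarith
    · exact (Finset.mem_filter.1 hz).2
  have hle_p : ∀ e ∈ E, e < y → e ≤ p := fun e he hey =>
    Finset.le_max' _ e (Finset.mem_insert_of_mem (Finset.mem_filter.2 ⟨he, hey⟩))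
  have hq_le : ∀ e ∈ E, y < e → q ≤ e := fun e he hye =>
    Finset.min'_le _ e (Finset.mem_insert_of_mem (Finset.mem_filter.2 ⟨he, hye⟩))
  have hgap : ε ≤ q - p := by
    rcases Finset.mem_insert.1 (Finset.max'_mem (insert (y - ε) (E.filter (· < y))) _)
      with hp | hp
    · linarith
    rcases Finset.mem_insert.1 (Finset.min'_mem (insert (y + ε) (E.filter (y < ·))) _)
      with hq | hq
    · linarith
    have := hsep p (Finset.mem_filter.1 hp).1 q (Finset.mem_filter.1 hq).1 (by linarith)
    rwa [abs_sub_comm, abs_of_pos (by linarith)] at this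
  refine ⟨(p + q) / 2, fun e he => ?_⟩
  rw [mem_uIcc]
  rcases lt_or_gt_of_ne (ne_of_mem_of_not_mem he hy) with hey | hye
  · have := hle_p e he hey
    exact ⟨by rw [abs_of_pos (by linarith)]; linarith, by grind⟩
  · have := hq_le e he hye
    exact ⟨by rw [abs_of_neg (by linarith)]; linarith, by grind⟩

theorem positive_length_codewords_preserved (n : ℕ)
    (a b : Fin n → ℝ) (ca cb : Fin n → Bool) (ε : ℝ) (hε : 0 < ε)
    (hmin : ∀ p ∈ Set.range a ∪ Set.range b, ∀ q ∈ Set.range a ∪ Set.range b,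
      p ≠ q → ε ≤ |p - q|)
    (I : Fin n → Set ℝ)
    (hI : ∀ k, I k = {x : ℝ |
      (if ca k then a k ≤ x else a k < x) ∧ (if cb k then x ≤ b k else x < b k)})
    (I' : Fin n → Set ℝ)
    (hI' : ∀ k, I' k = Set.Ioo (if ca k then a k - ε / 3 else a k + ε / 3)
      (if cb k then b k + ε / 3 else b k - ε / 3))
    (σ : Finset (Fin n)) (c d : ℝ) (hcd : c < d)
    (hsub : Set.Ioo c d ⊆ (⋂ j ∈ σ, I j) \ ⋃ l ∈ σᶜ, I l) :
    ((⋂ j ∈ σ, I' j) \ ⋃ l ∈ σᶜ, I' l).Nonempty := by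
  set E := ((finite_range a).union (finite_range b)).toFinset
  have hsep : ∀ p ∈ E, ∀ q ∈ E, p ≠ q → ε ≤ |p - q| := fun p hp q hq =>
    hmin p ((Finite.mem_toFinset _).1 hp) q ((Finite.mem_toFinset _).1 hq)
  obtain ⟨y, hy, hyE⟩ := (Ioo_infinite hcd).exists_notMem_finset E
  obtain ⟨x, hx⟩ := exists_far_point_in_same_gap hε hsep hyE
  have hxy : ∀ k, x ∈ I' k ↔ y ∈ I k := by
    intro k
    have ha := hx (a k) ((Finite.mem_toFinset _).2 (Or.inl (mem_range_self k)))
    have hb := hx (b k) ((Finite.mem_toFinset _).2 (Or.inr (mem_range_self k)))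
    rw [hI', hI, mem_Ioo, mem_ofPred_eq,
      ← ite_le_lt_left_iff_shift _ (by positivity) (by linarith [ha.1]),
      ← ite_le_lt_right_iff_shift _ (by positivity) (by linarith [hb.1]),
      ite_le_lt_left_iff_of_notMem_uIcc _ ha.2, ite_le_lt_right_iff_of_notMem_uIcc _ hb.2]
  refine ⟨x, ?_⟩
  simpa only [mem_sdiff, mem_iInter, mem_iUnion, hxy] using hsub hy
end
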